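/- arXiv:1807.05257 — 2 statements merged into one kernel-verified Lean document; each statement's English description precedes it below -/
import Mathlib

section
/- For every a in (0,1) and every odd positive integer k, the function h_{a,k}(x) = ψ⁽ᵏ⁾(x+a) - ψ⁽ᵏ⁾(x) - a·k!/x^{k+1} is strictly increasing and strictly concave on (0, ∞). -/
/-!
Differentiating the Euler limit formula for `log Γ` termwise gives, for `x > 0` and `k ≥ 1`,
`ψ⁽ᵏ⁾(x) = (-1)^(k+1) S_k(x)` with `S_k(x) = k! ∑ₙ (x + n)^-(k+1)`. For odd `k` the function
of the theorem is therefore `G_k(y) = S_k(y + a) - S_k(y) - a k!/y^(k+1)`.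
Since `S_k' = -S_{k+1}` and `(k!/y^(k+1))' = -(k+1)!/y^(k+2)`, we get `G_k' = -G_{k+1}`; and
every `G_k` is negative, because `S_k` is decreasing while the pole term is positive.
So `G_k' > 0`, and `G_k'` is strictly decreasing because `G_{k+1}` is strictly increasing.
-/

noncomputable def digamma : ℝ → ℝ := deriv (fun x => Real.log (Real.Gamma x))

noncomputable def polygamma (n : ℕ) : ℝ → ℝ := deriv^[n] digamma

open Filter Topology Set Real
open scoped Nat

theorem summable_inv_add_pow (x : ℝ) {p : ℕ} (hp : 1 < p) :
    Summable fun n : ℕ => ((x + n) ^ p)⁻¹ := by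
  have := (summable_one_div_nat_add_rpow x p).2 (by exact_mod_cast hp)
  refine .of_norm (this.congr fun n => ?_)
  rw [norm_eq_abs, abs_inv, abs_pow, rpow_natCast, add_comm, one_div]

theorem inv_add_pow_le_of_le {x y : ℝ} (hx : 0 < x) (hxy : x ≤ y) (c : ℕ) (p : ℕ) :
    ((y + c) ^ p)⁻¹ ≤ ((x + c) ^ p)⁻¹ :=
  inv_anti₀ (by positivity) (pow_le_pow_left₀ (by positivity) (by linarith) p)

theorem hasDerivAt_inv_add_pow (p : ℕ) (c : ℝ) {y : ℝ} (hy : y + c ≠ 0) :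
    HasDerivAt (fun y => ((y + c) ^ p)⁻¹) (-p * ((y + c) ^ (p + 1))⁻¹) y := by
  refine ((((hasDerivAt_id y).add_const c).fun_pow p).inv (pow_ne_zero _ hy)).congr_deriv ?_
  rcases p with _ | p
  · simp
  · simp only [id, mul_one, Nat.add_sub_cancel]
    field_simp
    ring

section LogGamma

open Real.BohrMollerup

local notation "γ" => eulerMascheroniConstant

theorem hasDerivAt_logGammaSeq (n : ℕ) {x : ℝ} (hx : 0 < x) :
    HasDerivAt (logGammaSeq · n) (log n - ∑ i ∈ Finset.range (n + 1), (x + i)⁻¹) x := by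
  have hsum : HasDerivAt (fun x => ∑ i ∈ Finset.range (n + 1), log (x + i))
      (∑ i ∈ Finset.range (n + 1), (x + i)⁻¹) x :=
    HasDerivAt.fun_sum fun i _ => ((hasDerivAt_id x).add_const (i : ℝ)).log (by positivity)
      |>.congr_deriv (by simp)
  simpa [logGammaSeq] using
    (((hasDerivAt_id x).mul_const (log n)).add_const _).fun_sub hsum

theorem tendsto_log_sub_sum_range_succ_inv :
    Tendsto (fun n : ℕ => log n - ∑ i ∈ Finset.range (n + 1), ((i : ℝ) + 1)⁻¹) atTop (𝓝 (-γ)) := by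
  have := (tendsto_harmonic_sub_log.add tendsto_one_div_add_atTop_nhds_zero_nat).neg
  rw [add_zero] at this
  refine this.congr fun n => ?_
  push_cast [harmonic, Finset.sum_range_succ]
  ring

theorem abs_inv_succ_sub_inv_add_le {x : ℝ} (hx : 0 < x) {n : ℕ} (hn : 1 ≤ n) :
    |((n : ℝ) + 1)⁻¹ - (x + n)⁻¹| ≤ (x + 1) / (n : ℝ) ^ 2 := by
  have hn' : (1 : ℝ) ≤ n := by exact_mod_cast hn
  rw [inv_sub_inv (by positivity) (by positivity), abs_div,
    abs_of_pos (by positivity : (0 : ℝ) < (n + 1) * (x + n))]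
  have hnum : |x + n - (n + 1)| ≤ x + 1 := abs_le.2 ⟨by linarith, by linarith⟩
  have hden : (n : ℝ) ^ 2 ≤ (n + 1) * (x + n) := by nlinarith
  calc |x + n - (n + 1)| / ((n + 1) * (x + n)) ≤ (x + 1) / ((n + 1) * (x + n)) := by gcongr
    _ ≤ (x + 1) / (n : ℝ) ^ 2 := by gcongr

theorem tendstoUniformlyOn_sum_inv_succ_sub_inv_add (b : ℝ) :
    TendstoUniformlyOn (fun N (x : ℝ) => ∑ i ∈ Finset.range N, (((i : ℝ) + 1)⁻¹ - (x + i)⁻¹))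
      (fun (x : ℝ) => ∑' i : ℕ, (((i : ℝ) + 1)⁻¹ - (x + i)⁻¹)) atTop (Ioo 0 b) := by
  refine tendstoUniformlyOn_tsum_nat_eventually
    ((summable_nat_pow_inv.2 one_lt_two).mul_left (b + 1)) ?_
  filter_upwards [eventually_ge_atTop 1] with n hn x hx
  calc ‖((n : ℝ) + 1)⁻¹ - (x + n)⁻¹‖ ≤ (x + 1) / (n : ℝ) ^ 2 :=
        abs_inv_succ_sub_inv_add_le hx.1 hn
    _ ≤ (b + 1) * ((n : ℝ) ^ 2)⁻¹ := by rw [← div_eq_mul_inv]; gcongr; exact hx.2.le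

theorem tendstoLocallyUniformlyOn_deriv_logGammaSeq :
    TendstoLocallyUniformlyOn
      (fun (n : ℕ) (x : ℝ) => log n - ∑ i ∈ Finset.range (n + 1), (x + i)⁻¹)
      (fun (x : ℝ) => -γ + ∑' i : ℕ, (((i : ℝ) + 1)⁻¹ - (x + i)⁻¹)) atTop (Ioi 0) := by
  refine tendstoLocallyUniformlyOn_of_forall_exists_nhds fun x hx =>
    ⟨Ioo 0 (x + 1), mem_nhdsWithin_of_mem_nhds (Ioo_mem_nhds hx (lt_add_one x)), ?_⟩
  have hpartial : TendstoUniformlyOn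
      (fun (n : ℕ) (y : ℝ) => ∑ i ∈ Finset.range (n + 1), (((i : ℝ) + 1)⁻¹ - (y + i)⁻¹))
      (fun (y : ℝ) => ∑' i : ℕ, (((i : ℝ) + 1)⁻¹ - (y + i)⁻¹)) atTop (Ioo 0 (x + 1)) :=
    fun u hu => (tendsto_add_atTop_nat 1).eventually
      (tendstoUniformlyOn_sum_inv_succ_sub_inv_add (x + 1) u hu)
  refine ((tendsto_log_sub_sum_range_succ_inv.tendstoUniformlyOn_const _).add hpartial).congr
    (Eventually.of_forall fun n y _ => ?_)
  simp only [Pi.add_apply, Finset.sum_sub_distrib]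
  ring

theorem hasDerivAt_log_Gamma {x : ℝ} (hx : 0 < x) :
    HasDerivAt (fun x => log (Gamma x)) (-γ + ∑' i : ℕ, (((i : ℝ) + 1)⁻¹ - (x + i)⁻¹)) x :=
  hasDerivAt_of_tendstoLocallyUniformlyOn isOpen_Ioi tendstoLocallyUniformlyOn_deriv_logGammaSeq
    (Eventually.of_forall fun n _ hy => hasDerivAt_logGammaSeq n hy)
    (fun _ hy => tendsto_log_gamma hy) hx

theorem digamma_eqOn :
    EqOn digamma (fun (x : ℝ) => -γ + ∑' i : ℕ, (((i : ℝ) + 1)⁻¹ - (x + i)⁻¹)) (Ioi 0) :=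
  fun _ hx => (hasDerivAt_log_Gamma hx).deriv

end LogGamma

noncomputable def polygammaSeries (k : ℕ) (x : ℝ) : ℝ := k ! * ∑' n : ℕ, ((x + n) ^ (k + 1))⁻¹

theorem hasDerivAt_digamma {x : ℝ} (hx : 0 < x) : HasDerivAt digamma (polygammaSeries 1 x) x := by
  have hseries : HasDerivAt (fun (y : ℝ) => ∑' i : ℕ, (((i : ℝ) + 1)⁻¹ - (y + i)⁻¹))
      (∑' i : ℕ, ((x + i) ^ 2)⁻¹) x := by
    refine hasDerivAt_tsum_of_isPreconnected
      (g := fun (i : ℕ) (y : ℝ) => ((i : ℝ) + 1)⁻¹ - (y + i)⁻¹)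
      (g' := fun (i : ℕ) (y : ℝ) => ((y + i) ^ 2)⁻¹) (summable_inv_add_pow (x / 2) one_lt_two)
      isOpen_Ioi (convex_Ioi _).isPreconnected (fun i y hy => ?_) (fun i y hy => ?_)
      (half_lt_self hx) ?_ (half_lt_self hx)
    · have hyi : 0 < y + i := add_pos_of_pos_of_nonneg ((half_pos hx).trans hy) i.cast_nonneg
      simpa using
        (hasDerivAt_const y ((i : ℝ) + 1)⁻¹).fun_sub (hasDerivAt_inv_add_pow 1 (i : ℝ) hyi.ne')
    · have hyi : 0 < y + i := add_pos_of_pos_of_nonneg ((half_pos hx).trans hy) i.cast_nonneg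
      rw [norm_inv, norm_pow, norm_of_nonneg hyi.le]
      exact inv_add_pow_le_of_le (half_pos hx) hy.le i 2
    · refine .of_norm_bounded_eventually_nat
        ((summable_nat_pow_inv.2 one_lt_two).mul_left (x + 1)) ?_
      filter_upwards [eventually_ge_atTop 1] with n hn
      exact (abs_inv_succ_sub_inv_add_le hx hn).trans_eq (div_eq_mul_inv _ _)
  refine (((hasDerivAt_const x _).add hseries).congr_deriv ?_).congr_of_eventuallyEq
    (digamma_eqOn.eventuallyEq_of_mem (isOpen_Ioi.mem_nhds hx))
  simp [polygammaSeries]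

theorem polygammaSeries_le_of_le {k : ℕ} (hk : 0 < k) {x y : ℝ} (hx : 0 < x) (hxy : x ≤ y) :
    polygammaSeries k y ≤ polygammaSeries k x :=
  mul_le_mul_of_nonneg_left
    ((summable_inv_add_pow y (by omega)).tsum_le_tsum (fun n => inv_add_pow_le_of_le hx hxy n _)
      (summable_inv_add_pow x (by omega)))
    (by positivity)

theorem hasDerivAt_polygammaSeries {k : ℕ} (hk : 0 < k) {x : ℝ} (hx : 0 < x) :
    HasDerivAt (polygammaSeries k) (-polygammaSeries (k + 1) x) x := by
  have hseries : HasDerivAt (fun (y : ℝ) => ∑' n : ℕ, ((y + n) ^ (k + 1))⁻¹)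
      (∑' n : ℕ, -((k + 1 : ℕ) : ℝ) * ((x + n) ^ (k + 1 + 1))⁻¹) x := by
    refine hasDerivAt_tsum_of_isPreconnected
      (g := fun (n : ℕ) (y : ℝ) => ((y + n) ^ (k + 1))⁻¹)
      (g' := fun (n : ℕ) (y : ℝ) => -((k + 1 : ℕ) : ℝ) * ((y + n) ^ (k + 1 + 1))⁻¹)
      ((summable_inv_add_pow (x / 2) (by omega : 1 < k + 2)).mul_left ((k + 1 : ℕ) : ℝ))
      isOpen_Ioi (convex_Ioi _).isPreconnected (fun n y hy => ?_) (fun n y hy => ?_)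
      (half_lt_self hx) (summable_inv_add_pow x (by omega)) (half_lt_self hx)
    · exact hasDerivAt_inv_add_pow _ _
        (add_pos_of_pos_of_nonneg ((half_pos hx).trans hy) n.cast_nonneg).ne'
    · have hyn : 0 < y + n := add_pos_of_pos_of_nonneg ((half_pos hx).trans hy) n.cast_nonneg
      rw [norm_mul, norm_neg, norm_natCast, norm_inv, norm_pow, norm_of_nonneg hyn.le]
      exact mul_le_mul_of_nonneg_left (inv_add_pow_le_of_le (half_pos hx) hy.le n _)
        (by positivity)
  refine (hseries.const_mul (k ! : ℝ)).congr_deriv ?_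
  rw [tsum_mul_left, polygammaSeries, Nat.factorial_succ]
  push_cast
  ring

noncomputable def polygammaGap (a : ℝ) (k : ℕ) (y : ℝ) : ℝ :=
  polygammaSeries k (y + a) - polygammaSeries k y - a * k ! / y ^ (k + 1)

theorem polygammaGap_neg {a : ℝ} (ha : 0 < a) {k : ℕ} (hk : 0 < k) {y : ℝ} (hy : 0 < y) :
    polygammaGap a k y < 0 := by
  have hseries := polygammaSeries_le_of_le hk hy (le_add_of_nonneg_right ha.le)
  have hpole : 0 < a * k ! / y ^ (k + 1) := by positivity
  rw [polygammaGap]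
  linarith

theorem hasDerivAt_polygammaGap {a : ℝ} (ha : 0 ≤ a) {k : ℕ} (hk : 0 < k) {y : ℝ} (hy : 0 < y) :
    HasDerivAt (polygammaGap a k) (-polygammaGap a (k + 1) y) y := by
  have hshift :
      HasDerivAt (fun y => polygammaSeries k (y + a)) (-polygammaSeries (k + 1) (y + a)) y :=
    (hasDerivAt_polygammaSeries hk (by linarith)).comp_add_const y a
  have hpole :
      HasDerivAt (fun y => a * k ! / y ^ (k + 1)) (-(a * (k + 1)! / y ^ (k + 1 + 1))) y := by
    have := (hasDerivAt_inv_add_pow (k + 1) 0 (by simpa using hy.ne')).const_mul (a * k !)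
    simp only [add_zero] at this
    refine this.congr_deriv ?_
    rw [Nat.factorial_succ]
    push_cast
    ring
  refine ((hshift.sub (hasDerivAt_polygammaSeries hk hy)).sub hpole).congr_deriv ?_
  rw [polygammaGap]
  ring

theorem continuousOn_polygammaGap {a : ℝ} (ha : 0 ≤ a) {k : ℕ} (hk : 0 < k) :
    ContinuousOn (polygammaGap a k) (Ioi 0) :=
  fun _ hy => (hasDerivAt_polygammaGap ha hk hy).continuousAt.continuousWithinAt

theorem strictMonoOn_polygammaGap {a : ℝ} (ha : 0 < a) {k : ℕ} (hk : 0 < k) :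
    StrictMonoOn (polygammaGap a k) (Ioi 0) := by
  refine strictMonoOn_of_hasDerivWithinAt_pos (convex_Ioi 0) (continuousOn_polygammaGap ha.le hk)
    (f' := fun y => -polygammaGap a (k + 1) y) (fun y hy => ?_) (fun y hy => ?_) <;>
    rw [interior_Ioi] at hy
  · exact (hasDerivAt_polygammaGap ha.le hk hy).hasDerivWithinAt
  · exact neg_pos.2 (polygammaGap_neg ha k.succ_pos hy)

theorem strictConcaveOn_polygammaGap {a : ℝ} (ha : 0 < a) {k : ℕ} (hk : 0 < k) :
    StrictConcaveOn ℝ (Ioi 0) (polygammaGap a k) := by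
  refine StrictAntiOn.strictConcaveOn_of_deriv (convex_Ioi 0)
    (continuousOn_polygammaGap ha.le hk) ?_
  rw [interior_Ioi]
  exact (strictMonoOn_polygammaGap ha k.succ_pos).neg.congr
    fun y hy => (hasDerivAt_polygammaGap ha.le hk hy).deriv.symm

theorem polygamma_succ_eqOn (k : ℕ) :
    EqOn (polygamma (k + 1)) (fun x => (-1) ^ k * polygammaSeries (k + 1) x) (Ioi 0) := by
  induction k with
  | zero =>
    intro x hx
    simp [polygamma, (hasDerivAt_digamma hx).deriv]
  | succ k ih =>
    intro x hx
    rw [polygamma, Function.iterate_succ_apply', ← polygamma,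
      (ih.eventuallyEq_of_mem (isOpen_Ioi.mem_nhds hx)).deriv_eq,
      ((hasDerivAt_polygammaSeries k.succ_pos hx).const_mul _).deriv]
    ring

theorem stmt_16 (a : ℝ) (ha : a ∈ Set.Ioo (0:ℝ) 1) (k : ℕ) (hk : Odd k) :
    StrictMonoOn (fun y : ℝ =>
      polygamma k (y + a) - polygamma k y - a * (Nat.factorial k : ℝ) / y ^ (k + 1))
      (Set.Ioi 0) ∧
    StrictConcaveOn ℝ (Set.Ioi 0) (fun y : ℝ =>
      polygamma k (y + a) - polygamma k y - a * (Nat.factorial k : ℝ) / y ^ (k + 1)) := by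
  obtain ⟨j, rfl⟩ := hk
  have hgap : EqOn (polygammaGap a (2 * j + 1)) (fun y : ℝ =>
      polygamma (2 * j + 1) (y + a) - polygamma (2 * j + 1) y
        - a * (Nat.factorial (2 * j + 1) : ℝ) / y ^ (2 * j + 1 + 1)) (Ioi 0) := by
    intro y hy
    have hya : y + a ∈ Ioi 0 := add_pos hy ha.1
    simp only [polygammaGap, polygamma_succ_eqOn (2 * j) hy, polygamma_succ_eqOn (2 * j) hya,
      pow_mul, neg_one_sq, one_pow, one_mul]
  exact ⟨(strictMonoOn_polygammaGap ha.1 (2 * j).succ_pos).congr hgap,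
    (strictConcaveOn_polygammaGap ha.1 (2 * j).succ_pos).congr hgap⟩
end

section
/- For every a in (0,1), every odd positive integer k, and every x > 1, ψ⁽ᵏ⁾(a) - ψ⁽ᵏ⁾(1) + k!·(a/x^{k+1} - 1/a^{k+1} - a) < ψ⁽ᵏ⁾(x+a) - ψ⁽ᵏ⁾(x) < a·k!/x^{k+1}. -/
/-!
For `x > 0`, the recurrence `ψ (x + 1) = ψ x + 1 / x` together with the monotonicity of `ψ`
(log-convexity of `Γ`) gives `ψ x - ψ 1 = ∑ₙ (1 / (n + 1) - 1 / (n + x))`. Differentiating termwise,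
`ψ⁽ᵏ⁾ x = k! ζ(k + 1, x)` for odd `k`, where `ζ(p, x) = ∑ₙ 1 / (n + x) ^ p`.

The upper bound holds because `ζ(k + 1, ·)` is decreasing. For the lower bound, convexity of
`t ↦ 1 / t ^ (k + 1)` makes `ζ(k + 1, t) - ζ(k + 1, t + a)` decreasing in `t`; comparing `t = x`
with `t = 1` and using `ζ(k + 1, a) = 1 / a ^ (k + 1) + ζ(k + 1, 1 + a)` gives the bound, and
`a / x ^ (k + 1) < a` makes it strict.
-/

open Filter Topology Set Real Finset
open scoped Nat

theorem ConvexOn.sub_le_sub_of_add_of_le {f : ℝ → ℝ} {s : Set ℝ} (hf : ConvexOn ℝ s f)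
    {a u v : ℝ} (ha : 0 < a) (hu : u ∈ s) (hv : v ∈ s) (hua : u + a ∈ s) (hva : v + a ∈ s)
    (huv : u ≤ v) :
    f (u + a) - f u ≤ f (v + a) - f v := by
  have h₁ : (f (u + a) - f u) / (u + a - u) ≤ (f (v + a) - f u) / (v + a - u) :=
    hf.secant_mono hu hua hva (by linarith) (by linarith) (by linarith)
  have h₂ : (f u - f (v + a)) / (u - (v + a)) ≤ (f v - f (v + a)) / (v - (v + a)) :=
    hf.secant_mono hva hu hv (by linarith) (by linarith) huv
  rw [← neg_div_neg_eq, neg_sub, neg_sub] at h₂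
  have := h₁.trans (h₂.trans_eq (by ring : _ = (f (v + a) - f v) / a))
  rwa [add_sub_cancel_left, div_le_div_iff_of_pos_right ha] at this

lemma hasDerivAt_one_div_add_pow (c : ℝ) (p : ℕ) {y : ℝ} (hy : c + y ≠ 0) :
    HasDerivAt (fun z => 1 / (c + z) ^ p) (-p / (c + y) ^ (p + 1)) y := by
  have h := (hasDerivAt_zpow (-p) (c + y) (Or.inl hy)).comp_const_add c y
  simp only [zpow_neg, zpow_natCast, ← one_div] at h
  refine h.congr_deriv ?_
  rw [show (-(p : ℤ) - 1) = -((p + 1 : ℕ) : ℤ) by push_cast; ring, zpow_neg, zpow_natCast]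
  push_cast
  ring

lemma summable_one_div_nat_add_pow {x : ℝ} (hx : 0 ≤ x) {p : ℕ} (hp : 2 ≤ p) :
    Summable fun n : ℕ => 1 / ((n : ℝ) + x) ^ p := by
  refine ((Real.summable_one_div_nat_add_rpow x p).mpr (by exact_mod_cast hp)).congr fun n => ?_
  rw [abs_of_nonneg (by positivity), Real.rpow_natCast]

noncomputable def hurwitzSum (p : ℕ) (x : ℝ) : ℝ := ∑' n : ℕ, 1 / ((n : ℝ) + x) ^ p

/-- For `p = 1` the two sums diverge separately; `hurwitzDiff 1 x = ψ x - ψ 1`, and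
`hurwitzDiff p x = ζ(p, 1) - ζ(p, x)` for `p ≥ 2`. -/
noncomputable def hurwitzDiff (p : ℕ) (x : ℝ) : ℝ :=
  ∑' n : ℕ, (1 / ((n : ℝ) + 1) ^ p - 1 / ((n : ℝ) + x) ^ p)

section hurwitzDiff

variable {p : ℕ} {x : ℝ}

lemma hasDerivAt_hurwitzDiff_term (p n : ℕ) {y : ℝ} (hy : 0 < y) :
    HasDerivAt (fun z => 1 / ((n : ℝ) + 1) ^ p - 1 / ((n : ℝ) + z) ^ p)
      (p / ((n : ℝ) + y) ^ (p + 1)) y := by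
  have hy : 0 < (n : ℝ) + y := by positivity
  simpa [neg_div] using (hasDerivAt_one_div_add_pow n p hy.ne').const_sub (1 / ((n : ℝ) + 1) ^ p)

lemma norm_hurwitzDiff_term_deriv_le (p n : ℕ) {δ y : ℝ} (hδ : 0 < δ) (hy : δ < y) :
    ‖(p : ℝ) / ((n : ℝ) + y) ^ (p + 1)‖ ≤ p * (1 / ((n : ℝ) + δ) ^ (p + 1)) := by
  have hnδ : 0 < (n : ℝ) + δ := by linarith [n.cast_nonneg (α := ℝ)]
  rw [Real.norm_of_nonneg (div_nonneg p.cast_nonneg (pow_nonneg (by linarith) _)), mul_one_div]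
  gcongr

lemma summable_hurwitzDiff_terms (hp : 1 ≤ p) (hx : 0 < x) :
    Summable fun n : ℕ => 1 / ((n : ℝ) + 1) ^ p - 1 / ((n : ℝ) + x) ^ p := by
  obtain ⟨δ, hδ, hδ1, hδx⟩ : ∃ δ : ℝ, 0 < δ ∧ δ < 1 ∧ δ < x :=
    ⟨min x 1 / 2, by positivity, by linarith [min_le_right x 1], by linarith [min_le_left x 1]⟩
  exact summable_of_summable_hasDerivAt_of_isPreconnected
    ((summable_one_div_nat_add_pow (p := p + 1) hδ.le (by omega)).mul_left (p : ℝ)) isOpen_Ioi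
    (convex_Ioi δ).isPreconnected (fun n _ hy => hasDerivAt_hurwitzDiff_term p n (hδ.trans hy))
    (fun n _ => norm_hurwitzDiff_term_deriv_le p n hδ) hδ1 (by simp) hδx

lemma hasDerivAt_hurwitzDiff (hp : 1 ≤ p) (hx : 0 < x) :
    HasDerivAt (hurwitzDiff p) (p * hurwitzSum (p + 1) x) x := by
  obtain ⟨δ, hδ, hδ1, hδx⟩ : ∃ δ : ℝ, 0 < δ ∧ δ < 1 ∧ δ < x :=
    ⟨min x 1 / 2, by positivity, by linarith [min_le_right x 1], by linarith [min_le_left x 1]⟩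
  have h := hasDerivAt_tsum_of_isPreconnected
    ((summable_one_div_nat_add_pow (p := p + 1) hδ.le (by omega)).mul_left (p : ℝ)) isOpen_Ioi
    (convex_Ioi δ).isPreconnected (fun n _ hy => hasDerivAt_hurwitzDiff_term p n (hδ.trans hy))
    (fun n _ => norm_hurwitzDiff_term_deriv_le p n hδ) hδ1 (by simp) hδx
  refine h.congr_deriv ?_
  simp_rw [hurwitzSum, ← tsum_mul_left, mul_one_div]

end hurwitzDiff

section hurwitzSum

variable {p : ℕ} {x : ℝ}

lemma hurwitzDiff_eq_sub (hp : 2 ≤ p) (hx : 0 ≤ x) :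
    hurwitzDiff p x = hurwitzSum p 1 - hurwitzSum p x :=
  (summable_one_div_nat_add_pow zero_le_one hp).tsum_sub (summable_one_div_nat_add_pow hx hp)

lemma hasDerivAt_hurwitzSum (hp : 2 ≤ p) (hx : 0 < x) :
    HasDerivAt (hurwitzSum p) (-p * hurwitzSum (p + 1) x) x := by
  have h := ((hasDerivAt_hurwitzDiff (p := p) (by omega) hx).const_sub (hurwitzSum p 1))
  rw [← neg_mul] at h
  refine h.congr_of_eventuallyEq ?_
  filter_upwards [Ioi_mem_nhds hx] with z hz
  rw [hurwitzDiff_eq_sub hp (le_of_lt hz), sub_sub_cancel]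

lemma hurwitzSum_strictAntiOn (hp : 2 ≤ p) : StrictAntiOn (hurwitzSum p) (Ioi 0) := by
  intro u hu v hv huv
  have hu : 0 < u := hu
  refine Summable.tsum_lt_tsum (i := 0) (fun n => ?_) ?_ (summable_one_div_nat_add_pow hv.le hp)
    (summable_one_div_nat_add_pow hu.le hp)
  · gcongr
  · simp only [Nat.cast_zero, zero_add]
    gcongr

lemma hurwitzSum_add_one (hp : 2 ≤ p) (hx : 0 ≤ x) :
    hurwitzSum p (x + 1) = hurwitzSum p x - 1 / x ^ p := by
  rw [hurwitzSum, hurwitzSum, (summable_one_div_nat_add_pow hx hp).tsum_eq_zero_add]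
  simp only [Nat.cast_zero, zero_add, Nat.cast_add, Nat.cast_one, add_sub_cancel_left]
  exact tsum_congr fun n => by ring_nf

lemma hurwitzSum_sub_hurwitzSum_add_le (hp : 2 ≤ p) {a u v : ℝ} (ha : 0 < a) (hu : 0 < u)
    (huv : u ≤ v) :
    hurwitzSum p v - hurwitzSum p (v + a) ≤ hurwitzSum p u - hurwitzSum p (u + a) := by
  have hconv : ConvexOn ℝ (Ioi 0) fun t : ℝ => 1 / t ^ p := by
    simpa [zpow_neg] using convexOn_zpow (𝕜 := ℝ) (-p)
  have hsum : ∀ t, 0 ≤ t → Summable fun n : ℕ => 1 / ((n : ℝ) + t) ^ p :=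
    fun t ht => summable_one_div_nat_add_pow ht hp
  rw [hurwitzSum, hurwitzSum, hurwitzSum, hurwitzSum,
    ← (hsum v (by linarith)).tsum_sub (hsum (v + a) (by linarith)),
    ← (hsum u hu.le).tsum_sub (hsum (u + a) (by linarith))]
  refine ((hsum v (by linarith)).sub (hsum (v + a) (by linarith))).tsum_le_tsum (fun n => ?_)
    ((hsum u hu.le).sub (hsum (u + a) (by linarith)))
  have hn : (0 : ℝ) ≤ n := n.cast_nonneg
  have := hconv.sub_le_sub_of_add_of_le ha (u := n + u) (v := n + v) (by simp; linarith)
    (by simp; linarith) (by simp; linarith) (by simp; linarith) (by linarith)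
  simp only [add_assoc] at this
  linarith

end hurwitzSum

section digamma

variable {x : ℝ}

lemma differentiableAt_log_Gamma (hx : 0 < x) : DifferentiableAt ℝ (fun x => log (Gamma x)) x :=
  (differentiableAt_Gamma fun m => by linarith [m.cast_nonneg (α := ℝ)]).log
    (Gamma_pos_of_pos hx).ne'

lemma digamma_add_one (hx : 0 < x) : digamma (x + 1) = digamma x + 1 / x := by
  rw [digamma, ← deriv_comp_add_const, one_div, ← Real.deriv_log,
    ← deriv_add (differentiableAt_log_Gamma hx) (differentiableAt_log hx.ne')]
  apply EventuallyEq.deriv_eq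
  filter_upwards [eventually_gt_nhds hx] with y hy
  rw [Gamma_add_one hy.ne', log_mul hy.ne' (Gamma_pos_of_pos hy).ne', add_comm]
  rfl

lemma digamma_add_nat (hx : 0 < x) (N : ℕ) :
    digamma (x + N) = digamma x + ∑ m ∈ range N, 1 / ((m : ℝ) + x) := by
  induction N with
  | zero => simp
  | succ N ih =>
    rw [Nat.cast_succ, ← add_assoc, digamma_add_one (by positivity), ih, sum_range_succ, add_comm x,
      add_assoc]

lemma monotoneOn_digamma : MonotoneOn digamma (Ioi 0) :=
  convexOn_log_Gamma.monotoneOn_deriv fun _ hy => differentiableAt_log_Gamma hy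

lemma tendsto_one_div_nat_add_atTop (x : ℝ) :
    Tendsto (fun N : ℕ => 1 / ((N : ℝ) + x)) atTop (𝓝 0) := by
  simp only [one_div]
  exact (tendsto_atTop_add_const_right _ x tendsto_natCast_atTop_atTop).inv_tendsto_atTop

lemma hurwitzDiff_one_add_one (hx : 0 < x) :
    hurwitzDiff 1 (x + 1) = hurwitzDiff 1 x + 1 / x := by
  have hsum : Tendsto (fun N : ℕ => ∑ n ∈ range N, (1 / ((n : ℝ) + x) - 1 / ((n : ℝ) + (x + 1))))
      atTop (𝓝 (hurwitzDiff 1 (x + 1) - hurwitzDiff 1 x)) := by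
    have := ((summable_hurwitzDiff_terms le_rfl (by positivity : 0 < x + 1)).hasSum.sub
      (summable_hurwitzDiff_terms le_rfl hx).hasSum).tendsto_sum_nat
    simpa only [hurwitzDiff, pow_one, sub_sub_sub_cancel_left] using this
  have htel : ∀ N : ℕ, ∑ n ∈ range N, (1 / ((n : ℝ) + x) - 1 / ((n : ℝ) + (x + 1)))
      = 1 / x - 1 / ((N : ℝ) + x) := by
    intro N
    have := sum_range_sub' (fun n : ℕ => 1 / ((n : ℝ) + x)) N
    simp only [Nat.cast_succ, Nat.cast_zero, zero_add] at this
    rw [← this]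
    exact sum_congr rfl fun n _ => by ring_nf
  simp only [htel] at hsum
  have := tendsto_nhds_unique hsum
    (by simpa only [sub_zero] using tendsto_const_nhds.sub (tendsto_one_div_nat_add_atTop x))
  linarith

lemma digamma_sub_digamma_one_of_le_one (hx : 0 < x) (hx1 : x ≤ 1) :
    digamma x - digamma 1 = hurwitzDiff 1 x := by
  set s : ℕ → ℝ := fun N => ∑ n ∈ range N, (1 / ((n : ℝ) + 1) - 1 / ((n : ℝ) + x))
  have hs : Tendsto s atTop (𝓝 (hurwitzDiff 1 x)) := by
    simpa only [hurwitzDiff, pow_one] using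
      (summable_hurwitzDiff_terms le_rfl hx).hasSum.tendsto_sum_nat
  have hs_eq : ∀ N : ℕ, s N = digamma x - digamma 1 + (digamma (1 + N) - digamma (x + N)) := by
    intro N
    simp only [s, sum_sub_distrib, digamma_add_nat hx, digamma_add_nat one_pos]
    ring
  -- monotonicity of ψ squeezes `ψ (x + N) ≤ ψ (1 + N) ≤ ψ (x + N + 1) = ψ (x + N) + 1 / (N + x)`
  have hlower : ∀ N : ℕ, digamma x - digamma 1 ≤ s N := fun N => by
    have : digamma (x + N) ≤ digamma (1 + N) :=
      monotoneOn_digamma (mem_Ioi.mpr (by positivity)) (mem_Ioi.mpr (by positivity)) (by linarith)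
    linarith [hs_eq N]
  have hupper : ∀ N : ℕ, s N - 1 / ((N : ℝ) + x) ≤ digamma x - digamma 1 := fun N => by
    have : digamma (1 + N) ≤ digamma (x + N + 1) :=
      monotoneOn_digamma (mem_Ioi.mpr (by positivity)) (mem_Ioi.mpr (by positivity)) (by linarith)
    have hstep : digamma (x + N + 1) = digamma (x + N) + 1 / ((N : ℝ) + x) := by
      rw [digamma_add_one (by positivity), add_comm x]
    linarith [hs_eq N]
  refine le_antisymm (ge_of_tendsto' hs hlower) ?_
  exact le_of_tendsto' (by simpa using hs.sub (tendsto_one_div_nat_add_atTop x)) hupper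

lemma digamma_sub_digamma_one (hx : 0 < x) : digamma x - digamma 1 = hurwitzDiff 1 x := by
  obtain ⟨n, hn⟩ := exists_nat_ge x
  induction n generalizing x with
  | zero => exact absurd hx (by simpa using hn)
  | succ n ih =>
    rcases le_or_gt x 1 with hx1 | hx1
    · exact digamma_sub_digamma_one_of_le_one hx hx1
    · have := ih (sub_pos.mpr hx1) (by push_cast at hn; linarith)
      have hψ := digamma_add_one (sub_pos.mpr hx1)
      have hT := hurwitzDiff_one_add_one (sub_pos.mpr hx1)
      rw [sub_add_cancel] at hψ hT
      linarith

end digamma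

section polygamma

variable {x : ℝ}

lemma polygamma_succ_eq_deriv (k : ℕ) : polygamma (k + 1) = deriv (polygamma k) :=
  Function.iterate_succ_apply' _ _ _

lemma polygamma_succ (k : ℕ) (hx : 0 < x) :
    polygamma (k + 1) x = (-1) ^ k * (k + 1)! * hurwitzSum (k + 2) x := by
  induction k generalizing x with
  | zero =>
    have h : digamma =ᶠ[𝓝 x] fun z => digamma 1 + hurwitzDiff 1 z := by
      filter_upwards [Ioi_mem_nhds hx] with z hz
      rw [← digamma_sub_digamma_one hz, add_sub_cancel]
    rw [polygamma_succ_eq_deriv, polygamma, Function.iterate_zero_apply, h.deriv_eq,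
      ((hasDerivAt_hurwitzDiff le_rfl hx).const_add _).deriv]
    simp
  | succ k ih =>
    have h : polygamma (k + 1) =ᶠ[𝓝 x] fun z => (-1) ^ k * (k + 1)! * hurwitzSum (k + 2) z := by
      filter_upwards [Ioi_mem_nhds hx] with z hz using ih hz
    rw [polygamma_succ_eq_deriv, h.deriv_eq,
      ((hasDerivAt_hurwitzSum (by omega) hx).const_mul _).deriv, Nat.factorial_succ (k + 1)]
    push_cast
    ring

lemma polygamma_of_odd {k : ℕ} (hk : Odd k) (hx : 0 < x) :
    polygamma k x = k ! * hurwitzSum (k + 1) x := by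
  obtain ⟨m, rfl⟩ := hk
  rw [polygamma_succ _ hx, (even_two_mul m).neg_one_pow, one_mul]

end polygamma

theorem stmt_17 (a : ℝ) (ha : a ∈ Set.Ioo (0:ℝ) 1) (k : ℕ) (hk : Odd k)
    (x : ℝ) (hx : 1 < x) :
    polygamma k a - polygamma k 1 +
        (Nat.factorial k : ℝ) * (a / x ^ (k + 1) - 1 / a ^ (k + 1) - a) <
      polygamma k (x + a) - polygamma k x ∧
    polygamma k (x + a) - polygamma k x <
      a * (Nat.factorial k : ℝ) / x ^ (k + 1) := by
  obtain ⟨ha0, -⟩ := ha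
  have hp : 2 ≤ k + 1 := by have := hk.pos; omega
  have hx0 : 0 < x := by linarith
  rw [polygamma_of_odd hk ha0, polygamma_of_odd hk one_pos, polygamma_of_odd hk hx0,
    polygamma_of_odd hk (by positivity)]
  have hdecr : hurwitzSum (k + 1) (x + a) < hurwitzSum (k + 1) x :=
    hurwitzSum_strictAntiOn hp (mem_Ioi.mpr hx0) (mem_Ioi.mpr (by positivity)) (by linarith)
  have hcmp := hurwitzSum_sub_hurwitzSum_add_le hp ha0 one_pos hx.le
  have hshift := hurwitzSum_add_one hp ha0.le
  have hxpow : a / x ^ (k + 1) < a := div_lt_self ha0 (one_lt_pow₀ hx (by omega))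
  have hfact : (0 : ℝ) < k ! := by positivity
  rw [add_comm 1 a] at hcmp
  rw [← mul_sub, ← mul_sub, ← mul_add]
  constructor
  · exact mul_lt_mul_of_pos_left (by linarith) hfact
  · exact (mul_neg_of_pos_of_neg hfact (sub_neg.mpr hdecr)).trans (by positivity)
end
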